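/- Descending string commutation: let β be a word θ_{r-1} θ_{r-2} ... θ_{r-u} in operators where each θ_j ∈ {∂_j, s_j} (subscripts strictly decreasing by one), and let β_+ be the same word with all subscripts increased by 1. Then, as operators on Z[x_1,...,x_n] (with all indices in range), β β_+ ∂_{r-u} = ∂_r β β_+. -/

import Mathlib

open MvPolynomial

/-- The transposition operator `s_i` on `ℤ[x_0, x_1, …]` swapping `x_i` and `x_{i+1}`. -/
noncomputable def sN (i : ℕ) : MvPolynomial ℕ ℤ → MvPolynomial ℕ ℤ :=
  ⇑(rename ⇑(Equiv.swap i (i + 1)) : MvPolynomial ℕ ℤ →ₐ[ℤ] MvPolynomial ℕ ℤ)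

/-- `D` is the divided difference operator `∂_i`, characterized by
`(x_i - x_{i+1}) * D P = P - s_i P`. -/
def IsDividedDiffN (i : ℕ) (D : MvPolynomial ℕ ℤ → MvPolynomial ℕ ℤ) : Prop :=
  ∀ P, (X i - X (i + 1)) * D P = P - sN i P

/-- The descending word `θ^{(1)}_{base-1} θ^{(2)}_{base-2} ⋯ θ^{(u)}_{base-u}`,
where `θ^{(j)}` is `∂` if `θ (j-1) = true` and `s` otherwise; the operator at the
rightmost (smallest) subscript is applied first. -/
noncomputable def wordOp (Dd : ℕ → (MvPolynomial ℕ ℤ → MvPolynomial ℕ ℤ))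
    (θ : ℕ → Bool) (base : ℕ) : ℕ → (MvPolynomial ℕ ℤ → MvPolynomial ℕ ℤ)
  | 0 => id
  | u + 1 => (wordOp Dd θ base u) ∘ (if θ u then Dd (base - 1 - u) else sN (base - 1 - u))

namespace DSC

abbrev R := MvPolynomial ℕ ℤ

lemma Xsub_ne {i j : ℕ} (h : i ≠ j) : (X i - X j : R) ≠ 0 :=
  sub_ne_zero.mpr (fun he => h (MvPolynomial.X_injective he))

lemma sN_mul (i : ℕ) (P Q : R) : sN i (P*Q) = sN i P * sN i Q := map_mul _ _ _
lemma sN_sub (i : ℕ) (P Q : R) : sN i (P-Q) = sN i P - sN i Q := map_sub _ _ _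
lemma sN_X (i j : ℕ) : sN i (X j) = X (Equiv.swap i (i+1) j) := rename_X _ _

lemma sN_X_left (i : ℕ) : sN i (X i) = X (i+1) := by
  rw [sN_X, Equiv.swap_apply_left]
lemma sN_X_right (i : ℕ) : sN i (X (i+1)) = X i := by
  rw [sN_X, Equiv.swap_apply_right]
lemma sN_X_far (i j : ℕ) (h1 : j ≠ i) (h2 : j ≠ i+1) : sN i (X j) = X j := by
  rw [sN_X, Equiv.swap_apply_of_ne_of_ne h1 h2]

lemma sN_sN_self (i : ℕ) (P : R) : sN i (sN i P) = P := by
  show (rename _) ((rename _) P) = P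
  rw [rename_rename,
    show (⇑(Equiv.swap i (i+1)) ∘ ⇑(Equiv.swap i (i+1))) = id by funext k; simp]
  exact DFunLike.congr_fun rename_id P

lemma sN_comm {i j : ℕ} (h : i + 2 ≤ j) (P : R) : sN i (sN j P) = sN j (sN i P) := by
  show (rename _) ((rename _) P) = (rename _) ((rename _) P)
  rw [rename_rename, rename_rename,
    show (⇑(Equiv.swap i (i+1)) ∘ ⇑(Equiv.swap j (j+1)))
        = (⇑(Equiv.swap j (j+1)) ∘ ⇑(Equiv.swap i (i+1))) by
      funext k
      simp only [Function.comp_apply, Equiv.swap_apply_def]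
      split_ifs <;> omega]

lemma swap_braid_perm (i : ℕ) :
    (Equiv.swap i (i+1)) * (Equiv.swap (i+1) (i+2)) * (Equiv.swap i (i+1))
      = (Equiv.swap (i+1) (i+2)) * (Equiv.swap i (i+1)) * (Equiv.swap (i+1) (i+2)) := by
  have h1 := Equiv.swap_mul_swap_mul_swap (x := i+2) (y := i+1) (z := i)
    (by omega) (by omega)
  have h2 := Equiv.swap_mul_swap_mul_swap (x := i) (y := i+1) (z := i+2)
    (by omega) (by omega)
  rw [Equiv.swap_comm (i+1) i, Equiv.swap_comm (i+2) (i+1)] at h1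
  rw [show Equiv.swap i (i+2) = Equiv.swap (i+2) i from Equiv.swap_comm _ _] at h1
  rw [h1, h2]

lemma swap_braid_fun (i : ℕ) :
    (⇑(Equiv.swap i (i+1)) ∘ ⇑(Equiv.swap (i+1) (i+1+1)) ∘ ⇑(Equiv.swap i (i+1)))
      = (⇑(Equiv.swap (i+1) (i+1+1)) ∘ ⇑(Equiv.swap i (i+1)) ∘ ⇑(Equiv.swap (i+1) (i+1+1))) := by
  have := congrArg (fun e : Equiv.Perm ℕ => (e : ℕ → ℕ)) (swap_braid_perm i)
  simpa [Equiv.Perm.coe_mul, Function.comp_assoc] using this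

lemma sN_braid (i : ℕ) (P : R) :
    sN i (sN (i+1) (sN i P)) = sN (i+1) (sN i (sN (i+1) P)) := by
  simp only [sN, rename_rename, swap_braid_fun]

variable {Dd : ℕ → (R → R)} (hDd : ∀ j, IsDividedDiffN j (Dd j))

section
include hDd

lemma Dd_sN_comm {i j : ℕ} (h : i + 2 ≤ j) (P : R) :
    Dd i (sN j P) = sN j (Dd i P) := by
  apply mul_left_cancel₀ (Xsub_ne (by omega : i ≠ i+1))
  rw [hDd i, sN_comm h]
  have h1 := congrArg (sN j) (hDd i P)
  rw [sN_mul, sN_sub, sN_sub, sN_X_far j i (by omega) (by omega),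
    sN_X_far j (i+1) (by omega) (by omega)] at h1
  exact h1.symm

lemma sN_Dd_comm {i j : ℕ} (h : i + 2 ≤ j) (P : R) :
    sN i (Dd j P) = Dd j (sN i P) := by
  apply mul_left_cancel₀ (Xsub_ne (by omega : j ≠ j+1))
  rw [hDd j]
  have h1 := congrArg (sN i) (hDd j P)
  rw [sN_mul, sN_sub, sN_sub, sN_X_far i j (by omega) (by omega),
    sN_X_far i (j+1) (by omega) (by omega), sN_comm h] at h1
  rw [h1]

lemma Dd_Dd_comm {i j : ℕ} (h : i + 2 ≤ j) (P : R) :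
    Dd i (Dd j P) = Dd j (Dd i P) := by
  apply mul_left_cancel₀ (Xsub_ne (by omega : j ≠ j+1))
  apply mul_left_cancel₀ (Xsub_ne (by omega : i ≠ i+1))
  have e2 := hDd i P
  have e3 := congrArg (sN j) e2
  rw [sN_mul, sN_sub, sN_sub, sN_X_far j i (by omega) (by omega),
    sN_X_far j (i+1) (by omega) (by omega)] at e3
  have e4 := hDd j P
  have e5 := congrArg (sN i) e4
  rw [sN_mul, sN_sub, sN_sub, sN_X_far i j (by omega) (by omega),
    sN_X_far i (j+1) (by omega) (by omega)] at e5
  have e6 := hDd i (Dd j P)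
  have e8 := hDd j (Dd i P)
  have e7 : sN i (sN j P) = sN j (sN i P) := sN_comm h P
  linear_combination (X j - X (j+1)) * e6 + e4 - e5 - (X i - X (i+1)) * e8 - e2 + e3 + e7

end
end DSC

namespace DSC
variable {Dd : ℕ → (R → R)} (hDd : ∀ j, IsDividedDiffN j (Dd j))
section
include hDd

lemma mixed_s_braid (i : ℕ) (P : R) :
    sN i (sN (i+1) (Dd i P)) = Dd (i+1) (sN i (sN (i+1) P)) := by
  apply mul_left_cancel₀ (Xsub_ne (by omega : i+1 ≠ i+1+1))
  have h1 := congrArg (sN (i+1)) (hDd i P)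
  rw [sN_mul, sN_sub, sN_sub, sN_X_far (i+1) i (by omega) (by omega), sN_X_left (i+1)] at h1
  have h2 := congrArg (sN i) h1
  rw [sN_mul, sN_sub, sN_sub, sN_X_left i, sN_X_far i (i+1+1) (by omega) (by omega)] at h2
  rw [hDd (i+1), ← sN_braid]
  exact h2

lemma Dd_braid (i : ℕ) (P : R) :
    Dd i (Dd (i+1) (Dd i P)) = Dd (i+1) (Dd i (Dd (i+1) P)) := by
  set a : R := X i with ha
  set b : R := X (i+1) with hb
  set c : R := X (i+1+1) with hc
  have hab : a - b ≠ 0 := Xsub_ne (by omega)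
  have hbc : b - c ≠ 0 := Xsub_ne (by omega)
  have hac : a - c ≠ 0 := Xsub_ne (by omega)
  -- first word
  have e1 := hDd i P
  have e2 := congrArg (sN (i+1)) e1
  rw [sN_mul, sN_sub, sN_sub, sN_X_far (i+1) i (by omega) (by omega), sN_X_left (i+1)] at e2
  have e3 := hDd (i+1) (Dd i P)
  have e4 := congrArg (sN i) e3
  rw [sN_mul, sN_sub, sN_sub, sN_X_right i, sN_X_far i (i+1+1) (by omega) (by omega)] at e4
  have e5 := congrArg (sN i) e1
  rw [sN_mul, sN_sub, sN_sub, sN_X_left i, sN_X_right i, sN_sN_self] at e5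
  have e6 := congrArg (sN i) e2
  rw [sN_mul, sN_sub, sN_sub, sN_X_left i, sN_X_far i (i+1+1) (by omega) (by omega)] at e6
  have e7 := hDd i (Dd (i+1) (Dd i P))
  have G1' : (a-b)*((a-b)*(b-c)*(a-c) * Dd i (Dd (i+1) (Dd i P)))
      = (a-b)*(P - sN i P - sN (i+1) P + sN i (sN (i+1) P) + sN (i+1) (sN i P)
          - sN i (sN (i+1) (sN i P))) := by
    linear_combination (a-b)*(b-c)*(a-c)*e7 + (a-b)*(a-c)*e3 - (a-b)*(b-c)*e4
      + (a-c)*e1 - (a-b)*e2 + (b-c)*e5 + (a-b)*e6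
  have G1 := mul_left_cancel₀ hab G1'
  -- second word
  have f1 := hDd (i+1) P
  have f2 := congrArg (sN i) f1
  rw [sN_mul, sN_sub, sN_sub, sN_X_right i, sN_X_far i (i+1+1) (by omega) (by omega)] at f2
  have f3 := hDd i (Dd (i+1) P)
  have f4 := congrArg (sN (i+1)) f3
  rw [sN_mul, sN_sub, sN_sub, sN_X_far (i+1) i (by omega) (by omega), sN_X_left (i+1)] at f4
  have f5 := congrArg (sN (i+1)) f1
  rw [sN_mul, sN_sub, sN_sub, sN_X_left (i+1), sN_X_right (i+1), sN_sN_self] at f5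
  have f6 := congrArg (sN (i+1)) f2
  rw [sN_mul, sN_sub, sN_sub, sN_X_far (i+1) i (by omega) (by omega), sN_X_right (i+1)] at f6
  have f7 := hDd (i+1) (Dd i (Dd (i+1) P))
  have G2' : (b-c)*((a-b)*(b-c)*(a-c) * Dd (i+1) (Dd i (Dd (i+1) P)))
      = (b-c)*(P - sN i P - sN (i+1) P + sN i (sN (i+1) P) + sN (i+1) (sN i P)
          - sN (i+1) (sN i (sN (i+1) P))) := by
    linear_combination (a-b)*(a-c)*(b-c)*f7 + (a-c)*(b-c)*f3 - (a-b)*(b-c)*f4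
      + (a-c)*f1 - (b-c)*f2 + (a-b)*f5 + (b-c)*f6
  have G2 := mul_left_cancel₀ hbc G2'
  apply mul_left_cancel₀ (mul_ne_zero (mul_ne_zero hab hbc) hac)
  rw [G1, G2, sN_braid]

end
end DSC


namespace DSC
variable {Dd : ℕ → (R → R)} (hDd : ∀ j, IsDividedDiffN j (Dd j))
section
include hDd

lemma op_comm (b b' : Bool) {k j : ℕ} (h : k + 2 ≤ j) (Q : R) :
    (if b then Dd k else sN k) ((if b' then Dd j else sN j) Q)
      = (if b' then Dd j else sN j) ((if b then Dd k else sN k) Q) := by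
  cases b <;> cases b' <;> simp only [if_true, if_false, Bool.false_eq_true]
  · exact sN_comm h Q
  · exact sN_Dd_comm hDd h Q
  · exact Dd_sN_comm hDd h Q
  · exact Dd_Dd_comm hDd h Q

lemma op_braid (b : Bool) (i : ℕ) (P : R) :
    (if b then Dd i else sN i) ((if b then Dd (i+1) else sN (i+1)) (Dd i P))
      = Dd (i+1) ((if b then Dd i else sN i) ((if b then Dd (i+1) else sN (i+1)) P)) := by
  cases b <;> simp only [if_true, if_false, Bool.false_eq_true]
  · exact mixed_s_braid hDd i P
  · exact Dd_braid hDd i P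

lemma wordOp_comm (θ : ℕ → Bool) (b : Bool) {k base : ℕ} :
    ∀ u, k + 2 ≤ base - u → ∀ Q,
      (if b then Dd k else sN k) (wordOp Dd θ base u Q)
        = wordOp Dd θ base u ((if b then Dd k else sN k) Q) := by
  intro u
  induction u with
  | zero => intro _ Q; simp [wordOp]
  | succ u ih =>
    intro h Q
    simp only [wordOp, Function.comp_apply]
    rw [ih (by omega), op_comm hDd b (θ u) (by omega)]

end
end DSC


open DSC in
/-- Descending string commutation: if `β = θ_{r-1} θ_{r-2} ⋯ θ_{r-u}` is a descending
word in the operators `∂_j, s_j` and `β_+` is the same word with all subscripts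
increased by `1`, then `β β_+ ∂_{r-u} = ∂_r β β_+`. -/
theorem descending_string_commutation
    (Dd : ℕ → (MvPolynomial ℕ ℤ → MvPolynomial ℕ ℤ))
    (hDd : ∀ j, IsDividedDiffN j (Dd j))
    (θ : ℕ → Bool) (r u : ℕ) (hur : u ≤ r) (P : MvPolynomial ℕ ℤ) :
    wordOp Dd θ r u (wordOp Dd θ (r + 1) u (Dd (r - u) P)) =
      Dd r (wordOp Dd θ r u (wordOp Dd θ (r + 1) u P)) := by
  revert hur
  induction u generalizing P with
  | zero => intro _; simp [wordOp]
  | succ u ih =>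
    intro hur
    have hur' : u ≤ r := by omega
    simp only [wordOp, Function.comp_apply]
    have h1 : r + 1 - 1 - u = (r - 1 - u) + 1 := by omega
    have h2 : r - (u+1) = r - 1 - u := by omega
    rw [h1, h2]
    rw [wordOp_comm hDd θ (θ u) u (by omega)]
    rw [op_braid hDd (θ u) (r-1-u)]
    have ih' := ih ((if θ u then Dd (r-1-u) else sN (r-1-u))
      ((if θ u then Dd ((r-1-u)+1) else sN ((r-1-u)+1)) P)) hur'
    rw [show r - u = (r - 1 - u) + 1 by omega] at ih'
    rw [ih']
    rw [wordOp_comm hDd θ (θ u) u (by omega)]
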